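/- Let n be a positive integer and let ρ be a complex number with ρ ≠ 1. Then A_{n−1}(ρ) = −((1−ρ)^n / n) · 𝓑_n(ρ), relating the Eulerian polynomials to the Apostol-Bernoulli numbers. -/

import Mathlib

open Finset Nat

/-- The Eulerian numbers `A_{n,j} = Σ_{v=0}^j (−1)^v C(n+1,v) (j−v)^n`. -/
noncomputable def eulerianNumber (n j : ℕ) : ℂ :=
  ∑ v ∈ Finset.range (j + 1), (-1 : ℂ) ^ v * ((n + 1).choose v : ℂ) * ((j : ℂ) - v) ^ n

/-- The Eulerian polynomials `A_n(ρ) = Σ_{j=0}^n A_{n,j} ρ^j`. -/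
noncomputable def eulerianPoly (n : ℕ) (ρ : ℂ) : ℂ :=
  ∑ j ∈ Finset.range (n + 1), eulerianNumber n j * ρ ^ j

/-- The Apostol-Bernoulli numbers `𝓑_n(ρ)`, defined by the generating function
`t / (ρ e^t - 1) = Σ_{n≥0} 𝓑_n(ρ) t^n / n!` (as a formal power series). -/
noncomputable def apostolBernoulliNum (n : ℕ) (ρ : ℂ) : ℂ :=
  (n ! : ℂ) * PowerSeries.coeff n (PowerSeries.X * (ρ • PowerSeries.exp ℂ - 1)⁻¹)

/-!
For `‖ρ‖ < 1` one has `A_m(ρ) / (1 - ρ)^(m+1) = Σ_k k^m ρ^k`. We use this as an identity of formal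
power series in `ρ`: the Eulerian numbers are the coefficients of `(1 - ρ)^(m+1) Σ_k k^m ρ^k`, and
they vanish beyond degree `m` because they are an `(m+1)`-st finite difference of a polynomial of
degree `m`. Shifting `k ↦ k + 1` and expanding `(k + 1)^m` yields the polynomial recurrence
`A_m(ρ) = ρ Σ_k C(m,k) (1 - ρ)^(m-k) A_k(ρ)`, which says precisely that
`Σ_e A_e(ρ) t^e / ((1 - ρ)^(e+1) e!)` is the inverse of `1 - ρ e^t`. The coefficient of `t^(n-1)`
gives the theorem.
-/

open PowerSeries

theorem eulerianNumber_eq_zero_of_lt {m j : ℕ} (h : m < j) : eulerianNumber m j = 0 := by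
  have hΔ : (fwdDiff 1)^[m + 1] (fun r : ℂ ↦ (r + ((j : ℂ) - (m + 1))) ^ m) 0 = 0 := by
    rw [fwdDiff_iter_comp_add 1 (fun r : ℂ ↦ r ^ m),
      fwdDiff_iter_pow_eq_zero_of_lt (Nat.lt_succ_self m)]
    rfl
  rw [fwdDiff_iter_eq_sum_shift, ← Finset.sum_range_reflect] at hΔ
  rw [eulerianNumber, ← Finset.sum_range_add_sum_Ico _ (show m + 2 ≤ j + 1 by omega),
    Finset.sum_eq_zero (s := Finset.Ico _ _), add_zero, ← hΔ]
  · refine Finset.sum_congr rfl fun v hv ↦ ?_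
    have hv : v ≤ m + 1 := Nat.lt_succ_iff.mp (Finset.mem_range.mp hv)
    rw [Nat.add_sub_cancel, Nat.sub_sub_self hv, Nat.choose_symm hv, nsmul_eq_mul,
      Nat.cast_sub hv]
    push_cast [zsmul_eq_mul]
    ring
  · intro v hv
    rw [Nat.choose_eq_zero_of_lt (Finset.mem_Ico.mp hv).1]
    simp

theorem PowerSeries.coeff_one_sub_X_pow {R : Type*} [CommRing R] (N k : ℕ) :
    coeff k ((1 - X : R⟦X⟧) ^ N) = (-1) ^ k * N.choose k := by
  have : (1 - X : R⟦X⟧) ^ N = rescale (-1) (((1 + Polynomial.X) ^ N : Polynomial R) : R⟦X⟧) := by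
    simp [rescale_X, sub_eq_add_neg]
  rw [this, coeff_rescale, Polynomial.coeff_coe, Polynomial.coeff_one_add_X_pow]

noncomputable def eulerianPolynomial (m : ℕ) : Polynomial ℂ :=
  ∑ j ∈ range (m + 1), Polynomial.monomial j (eulerianNumber m j)

theorem coeff_eulerianPolynomial (m j : ℕ) :
    (eulerianPolynomial m).coeff j = eulerianNumber m j := by
  simp only [eulerianPolynomial, Polynomial.finsetSum_coeff, Polynomial.coeff_monomial,
    Finset.sum_ite_eq', Finset.mem_range]
  split_ifs with hj
  · rfl
  · exact (eulerianNumber_eq_zero_of_lt (by omega)).symm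

theorem eval_eulerianPolynomial (m : ℕ) (ρ : ℂ) :
    (eulerianPolynomial m).eval ρ = eulerianPoly m ρ := by
  simp [eulerianPolynomial, eulerianPoly, Polynomial.eval_finsetSum]

noncomputable def natPowSeries (m : ℕ) : ℂ⟦X⟧ :=
  mk fun k ↦ (k : ℂ) ^ m

theorem one_sub_X_pow_mul_natPowSeries (m : ℕ) :
    (1 - X) ^ (m + 1) * natPowSeries m = (eulerianPolynomial m : ℂ⟦X⟧) := by
  ext j
  rw [coeff_mul, Finset.Nat.sum_antidiagonal_eq_sum_range_succ
    (fun i k ↦ coeff i ((1 - X : ℂ⟦X⟧) ^ (m + 1)) * coeff k (natPowSeries m)),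
    Polynomial.coeff_coe, coeff_eulerianPolynomial, eulerianNumber]
  refine Finset.sum_congr rfl fun v hv ↦ ?_
  rw [coeff_one_sub_X_pow, natPowSeries, coeff_mk,
    Nat.cast_sub (Nat.lt_succ_iff.mp (Finset.mem_range.mp hv))]

theorem natPowSeries_eq_X_mul_sum {m : ℕ} (hm : 0 < m) :
    natPowSeries m = X * ∑ i ∈ range (m + 1), (m.choose i : ℂ) • natPowSeries i := by
  ext (_ | k)
  · simp [natPowSeries, zero_pow hm.ne']
  · simp only [coeff_succ_X_mul, natPowSeries, map_sum, map_smul, coeff_mk, smul_eq_mul]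
    push_cast
    rw [add_pow]
    exact Finset.sum_congr rfl fun i _ ↦ by ring

theorem eulerianPolynomial_eq_X_mul_sum {m : ℕ} (hm : 0 < m) :
    eulerianPolynomial m = Polynomial.X * ∑ k ∈ range (m + 1),
      (m.choose k : ℂ) • ((1 - Polynomial.X) ^ (m - k) * eulerianPolynomial k) := by
  apply Polynomial.coe_injective ℂ
  rw [Polynomial.coe_mul, ← @Polynomial.coeToPowerSeries.ringHom_apply _ _ (∑ _ ∈ _, _), map_sum]
  simp only [Polynomial.coeToPowerSeries.ringHom_apply, Polynomial.coe_smul, Polynomial.coe_mul,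
    Polynomial.coe_pow, Polynomial.coe_sub, Polynomial.coe_one, Polynomial.coe_X,
    ← one_sub_X_pow_mul_natPowSeries]
  rw [natPowSeries_eq_X_mul_sum hm, mul_left_comm, Finset.mul_sum]
  refine congrArg _ (Finset.sum_congr rfl fun k hk ↦ ?_)
  have hk : k ≤ m := Nat.lt_succ_iff.mp (Finset.mem_range.mp hk)
  rw [mul_smul_comm, ← mul_assoc, ← pow_add, show m - k + (k + 1) = m + 1 by omega]

theorem eulerianPoly_eq_mul_sum {m : ℕ} (hm : 0 < m) (ρ : ℂ) :
    eulerianPoly m ρ =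
      ρ * ∑ k ∈ range (m + 1), m.choose k * ((1 - ρ) ^ (m - k) * eulerianPoly k ρ) := by
  simpa [eval_eulerianPolynomial, Polynomial.eval_finsetSum] using
    congrArg (Polynomial.eval ρ) (eulerianPolynomial_eq_X_mul_sum hm)

theorem eulerianPoly_zero (ρ : ℂ) : eulerianPoly 0 ρ = 1 := by
  simp [eulerianPoly, eulerianNumber]

noncomputable def eulerianSeries (ρ : ℂ) : ℂ⟦X⟧ :=
  mk fun e ↦ eulerianPoly e ρ / ((1 - ρ) ^ (e + 1) * e !)

theorem coeff_eulerianSeries_eq_mul_coeff_mul_exp {ρ : ℂ} (hρ : ρ ≠ 1) {d : ℕ} (hd : 0 < d) :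
    coeff d (eulerianSeries ρ) = ρ * coeff d (eulerianSeries ρ * exp ℂ) := by
  have hρ' : 1 - ρ ≠ 0 := sub_ne_zero.mpr hρ.symm
  rw [coeff_mul, Finset.Nat.sum_antidiagonal_eq_sum_range_succ
    (fun k i ↦ coeff k (eulerianSeries ρ) * coeff i (exp ℂ))]
  simp only [eulerianSeries, coeff_mk, coeff_exp, map_div₀, map_one, map_natCast]
  rw [eulerianPoly_eq_mul_sum hd, mul_div_assoc, Finset.sum_div]
  refine congrArg _ (Finset.sum_congr rfl fun k hk ↦ ?_)
  have hk : k ≤ d := Nat.lt_succ_iff.mp (Finset.mem_range.mp hk)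
  have hfac : (d ! : ℂ) = d.choose k * k ! * (d - k)! := by
    exact_mod_cast (Nat.choose_mul_factorial_mul_factorial hk).symm
  have hpow : (1 - ρ) ^ (d + 1) = (1 - ρ) ^ (d - k) * (1 - ρ) ^ (k + 1) := by
    rw [← pow_add, show d - k + (k + 1) = d + 1 by omega]
  have hchoose : (d.choose k : ℂ) ≠ 0 := Nat.cast_ne_zero.mpr (Nat.choose_pos hk).ne'
  rw [hfac, hpow]
  field_simp

theorem one_sub_smul_exp_mul_eulerianSeries {ρ : ℂ} (hρ : ρ ≠ 1) :
    (1 - ρ • exp ℂ) * eulerianSeries ρ = 1 := by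
  ext (_ | d)
  · have hρ' : 1 - ρ ≠ 0 := sub_ne_zero.mpr hρ.symm
    simpa [eulerianSeries, eulerianPoly_zero] using mul_inv_cancel₀ hρ'
  · rw [sub_mul, one_mul, smul_mul_assoc, map_sub, map_smul, mul_comm (exp ℂ),
      coeff_eulerianSeries_eq_mul_coeff_mul_exp hρ d.succ_pos, coeff_one]
    simp

theorem inv_smul_exp_sub_one {ρ : ℂ} (hρ : ρ ≠ 1) :
    (ρ • exp ℂ - 1)⁻¹ = -eulerianSeries ρ := by
  rw [PowerSeries.inv_eq_iff_mul_eq_one (by simpa [sub_eq_zero] using hρ), neg_mul_comm,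
    neg_sub, mul_comm, one_sub_smul_exp_mul_eulerianSeries hρ]

theorem stmt8 (n : ℕ) (hn : 0 < n) (ρ : ℂ) (hρ : ρ ≠ 1) :
    eulerianPoly (n - 1) ρ = -((1 - ρ) ^ n / (n : ℂ)) * apostolBernoulliNum n ρ := by
  obtain ⟨e, rfl⟩ : ∃ e, n = e + 1 := ⟨n - 1, by omega⟩
  have hρ' : 1 - ρ ≠ 0 := sub_ne_zero.mpr hρ.symm
  rw [apostolBernoulliNum, inv_smul_exp_sub_one hρ, coeff_succ_X_mul, map_neg, eulerianSeries,
    coeff_mk, Nat.add_sub_cancel, factorial_succ]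
  have he : (e ! : ℂ) ≠ 0 := Nat.cast_ne_zero.mpr (factorial_ne_zero e)
  push_cast
  field_simp
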